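/- arXiv:1907.06951 — 2 statements merged into one kernel-verified Lean document; each statement's English description precedes it below -/
import Mathlib

section
/- For n ≥ 3, let M_0 be the set of edges of FQ_n joining vertices that differ exactly in coordinate n−1 (the (n−1)-th direction hypercube edges). Then FQ_n − M_0 is isomorphic to Q_n, via the map fixing vertices with (n−1)-th coordinate 0 and sending (x_1,...,x_{n−2},1,j) to (x̄_1,...,x̄_{n−2},1,j̄). -/
open SimpleGraph

def cmpl {n : ℕ} (x : Fin n → Bool) : Fin n → Bool := fun i => !x i

/-- The `n`-dimensional hypercube on vertex set `{0,1}^n`. -/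
def Q (n : ℕ) : SimpleGraph (Fin n → Bool) where
  Adj x y := hammingDist x y = 1
  symm := ⟨fun x y h => (hammingDist_comm y x).trans h⟩
  loopless := ⟨fun x h => by simp [hammingDist_self] at h⟩

/-- The folded hypercube: `Q n` plus all complement edges. -/
def FQ (n : ℕ) : SimpleGraph (Fin n → Bool) where
  Adj x y := hammingDist x y = 1 ∨ (x ≠ y ∧ y = cmpl x)
  symm := by
    refine ⟨fun x y h => ?_⟩
    rcases h with h | ⟨hne, he⟩
    · exact Or.inl ((hammingDist_comm y x).trans h)
    · refine Or.inr ⟨hne.symm, ?_⟩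
      subst he; funext i; simp [cmpl]
  loopless := by
    refine ⟨fun x h => ?_⟩
    rcases h with h | ⟨hne, _⟩
    · simp [hammingDist_self] at h
    · exact hne rfl

/-- The set of hypercube edges in coordinate direction `j`. -/
def Mdir (n : ℕ) (j : Fin n) : Set (Sym2 (Fin n → Bool)) :=
  {e | ∃ x, e = s(x, Function.update x j (!x j))}

/-- The set of complement edges. -/
def M2 (n : ℕ) : Set (Sym2 (Fin n → Bool)) := {e | ∃ x, e = s(x, cmpl x)}

/-- `M` is a perfect matching of `G`: a set of edges of `G` such that every
vertex lies in exactly one edge of `M`. -/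
def IsPerfectMatchingSet {V : Type*} (G : SimpleGraph V) (M : Set (Sym2 V)) : Prop :=
  M ⊆ G.edgeSet ∧ ∀ v : V, ∃! e, e ∈ M ∧ v ∈ e

/-! The map `twist j` fixes the vertices with `x j = 0` and complements every coordinate but `j`
of the others. It sends each edge of `Q n` in a direction `i ≠ j` to an edge in direction `i`, and
each edge in direction `j` to a complement edge; since it is an involution, the edges of `FQ n` it
misses are exactly those in direction `j`, the ones deleted. -/

section Twist

variable {ι : Type*} [DecidableEq ι]

def flipAt (x : ι → Bool) (i : ι) : ι → Bool := Function.update x i (!x i)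

lemma flipAt_apply (x : ι → Bool) (i k : ι) : flipAt x i k = if k = i then !x k else x k := by
  by_cases hk : k = i
  · subst hk; simp [flipAt]
  · simp [flipAt, hk]

lemma flipAt_flipAt (x : ι → Bool) (i : ι) : flipAt (flipAt x i) i = x := by
  funext k
  by_cases hk : k = i <;> simp [flipAt_apply, hk]

lemma flipAt_right_injective (x : ι → Bool) : Function.Injective (flipAt x) := by
  intro i i' h
  by_contra hne
  simpa [flipAt_apply, hne] using congrFun h i

lemma hammingDist_eq_one_iff [Fintype ι] {x y : ι → Bool} :
    hammingDist x y = 1 ↔ ∃ i, y = flipAt x i := by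
  simp only [hammingDist, Finset.card_eq_one, Finset.ext_iff, Finset.mem_filter,
    Finset.mem_univ, true_and, Finset.mem_singleton, funext_iff, flipAt_apply]
  refine exists_congr fun i => forall_congr' fun k => ?_
  by_cases hk : k = i <;> cases x k <;> cases y k <;> simp [hk]

def twist (j : ι) (x : ι → Bool) : ι → Bool :=
  fun i => if x j = true ∧ i ≠ j then !x i else x i

lemma twist_involutive (j : ι) : Function.Involutive (twist j) := by
  intro x
  funext i
  by_cases hij : i = j
  · subst hij; simp [twist]
  · cases hx : x j <;> simp [twist, hij, hx]

lemma twist_flipAt_of_ne {i j : ι} (hij : i ≠ j) (x : ι → Bool) :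
    twist j (flipAt x i) = flipAt (twist j x) i := by
  funext k
  by_cases hk : k = i
  · subst hk; cases hx : x j <;> simp [twist, flipAt_apply, hij, Ne.symm hij, hx]
  · cases hx : x j <;> simp [twist, flipAt_apply, hk, Ne.symm hij, hx]

end Twist

section FoldedHypercube

variable {n : ℕ}

lemma twist_flipAt_self (j : Fin n) (x : Fin n → Bool) :
    twist j (flipAt x j) = cmpl (twist j x) := by
  funext k
  by_cases hk : k = j
  · subst hk; simp [twist, flipAt_apply, cmpl]
  · cases hx : x j <;> simp [twist, flipAt_apply, cmpl, hk, hx]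

lemma ne_cmpl (hn : 1 ≤ n) (x : Fin n → Bool) : x ≠ cmpl x := by
  intro h
  simpa [cmpl] using congrFun h ⟨0, hn⟩

lemma cmpl_ne_flipAt (hn : 2 ≤ n) (x : Fin n → Bool) (j : Fin n) : cmpl x ≠ flipAt x j := by
  have : Nontrivial (Fin n) := Fin.nontrivial_iff_two_le.mpr hn
  obtain ⟨k, hk⟩ := exists_ne j
  intro h
  simpa [cmpl, flipAt_apply, hk] using congrFun h k

lemma mem_Mdir_iff {j : Fin n} {x y : Fin n → Bool} :
    s(x, y) ∈ Mdir n j ↔ y = flipAt x j := by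
  constructor
  · rintro ⟨u, hu⟩
    rcases Sym2.eq_iff.mp hu with ⟨rfl, rfl⟩ | ⟨rfl, rfl⟩
    · rfl
    · exact (flipAt_flipAt _ j).symm
  · rintro rfl
    exact ⟨x, rfl⟩

lemma Q_adj_iff {x y : Fin n → Bool} : (Q n).Adj x y ↔ ∃ i, y = flipAt x i :=
  hammingDist_eq_one_iff

lemma deleteEdges_Mdir_adj_iff (hn : 2 ≤ n) (j : Fin n) {x y : Fin n → Bool} :
    ((FQ n).deleteEdges (Mdir n j)).Adj x y ↔ (∃ i ≠ j, y = flipAt x i) ∨ y = cmpl x := by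
  rw [deleteEdges_adj]
  constructor
  · rintro ⟨hdist | ⟨-, rfl⟩, hM⟩
    · obtain ⟨i, rfl⟩ := hammingDist_eq_one_iff.mp hdist
      exact Or.inl ⟨i, fun hij => hM (mem_Mdir_iff.mpr (hij ▸ rfl)), rfl⟩
    · exact Or.inr rfl
  · rintro (⟨i, hij, rfl⟩ | rfl)
    · exact ⟨Or.inl (hammingDist_eq_one_iff.mpr ⟨i, rfl⟩),
        fun hM => hij (flipAt_right_injective x (mem_Mdir_iff.mp hM))⟩
    · exact ⟨Or.inr ⟨ne_cmpl (by omega) x, rfl⟩,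
        fun hM => cmpl_ne_flipAt hn x j (mem_Mdir_iff.mp hM)⟩

lemma deleteEdges_Mdir_adj_twist_iff (hn : 2 ≤ n) (j : Fin n) {x y : Fin n → Bool} :
    ((FQ n).deleteEdges (Mdir n j)).Adj (twist j x) (twist j y) ↔ (Q n).Adj x y := by
  have htwist := (twist_involutive j).injective
  have hne : ∀ i ≠ j, twist j y = flipAt (twist j x) i ↔ y = flipAt x i := fun i hij => by
    rw [← twist_flipAt_of_ne hij, htwist.eq_iff]
  have hself : twist j y = cmpl (twist j x) ↔ y = flipAt x j := by
    rw [← twist_flipAt_self, htwist.eq_iff]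
  rw [deleteEdges_Mdir_adj_iff hn, Q_adj_iff]
  constructor
  · rintro (⟨i, hij, h⟩ | h)
    · exact ⟨i, (hne i hij).mp h⟩
    · exact ⟨j, hself.mp h⟩
  · rintro ⟨i, rfl⟩
    by_cases hij : i = j
    · subst hij
      exact Or.inr (hself.mpr rfl)
    · exact Or.inl ⟨i, hij, (hne i hij).mpr rfl⟩

end FoldedHypercube

/-- `FQ n − M₀` is isomorphic to `Q n` via the map fixing vertices whose `(n-1)`-th coordinate
is `0` and complementing all other coordinates of vertices whose `(n-1)`-th coordinate is `1`. -/
theorem stmt5 (n : ℕ) (hn : 3 ≤ n) :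
    ∃ φ : Q n ≃g (FQ n).deleteEdges (Mdir n ⟨n - 2, by omega⟩),
      ∀ x : Fin n → Bool,
        φ x = fun i => if x ⟨n - 2, by omega⟩ = true ∧ i ≠ ⟨n - 2, by omega⟩ then !x i else x i :=
  ⟨⟨(twist_involutive _).toPerm _, deleteEdges_Mdir_adj_twist_iff (by omega) _⟩, fun _ => rfl⟩
end

section
/- For n ≥ 2, the map f : {0,1}^n → {0,1}^n fixing vertices with last coordinate 0 and sending (x,1) to (x̄,1) (complementing the first n−1 coordinates) is an involution that maps the edge set of Q_n bijectively onto the edge set of FQ_n − M_1, exchanging the cross edges of M_1 with the complement edges M_2. -/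
open SimpleGraph

/-! With `j` the last coordinate, `f x = cmpl (flipAt j x)` if `x j = 1` and `f x = x` otherwise.
Flips and complementation all commute and `f` preserves coordinate `j`, so `f` commutes with
`flipAt i` for `i ≠ j` and maps each direction class `Mdir i`, `i ≠ j`, onto itself. If `x j = 0`,
`f` sends the cross edge `{x, flipAt j x}` to the complement edge `{x, cmpl x}`; since every edge
of `M₁` and of `M₂` has an endpoint with `x j = 0`, `f` exchanges `M₁` and `M₂`. As `f` is an
involution, these maps-to statements are already bijections. -/

theorem Function.Involutive.sym2_map {α : Type*} {f : α → α} (hf : Function.Involutive f) :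
    Function.Involutive (Sym2.map f) := fun e => by
  rw [Sym2.map_map, hf.comp_self, Sym2.map_id, id]

theorem Function.Involutive.bijOn_of_mapsTo {α : Type*} {f : α → α} {s t : Set α}
    (hf : Function.Involutive f) (hst : Set.MapsTo f s t) (hts : Set.MapsTo f t s) :
    Set.BijOn f s t :=
  Set.InvOn.bijOn ⟨fun x _ => hf x, fun x _ => hf x⟩ hst hts

namespace Hypercube

variable {n : ℕ} {i j : Fin n} {x : Fin n → Bool}

def flipAt (i : Fin n) (x : Fin n → Bool) : Fin n → Bool := Function.update x i (!x i)

theorem flipAt_apply (i k : Fin n) (x : Fin n → Bool) :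
    flipAt i x k = if k = i then !x k else x k := by
  by_cases h : k = i <;> simp [flipAt, h]

theorem flipAt_apply_of_ne {k : Fin n} (h : k ≠ i) (x : Fin n → Bool) : flipAt i x k = x k := by
  simp [flipAt_apply, h]

theorem flipAt_flipAt (i : Fin n) (x : Fin n → Bool) : flipAt i (flipAt i x) = x := by
  funext k; by_cases h : k = i <;> simp [flipAt_apply, h]

theorem flipAt_comm (i j : Fin n) (x : Fin n → Bool) :
    flipAt i (flipAt j x) = flipAt j (flipAt i x) := by
  funext k; simp only [flipAt_apply]; split_ifs <;> simp_all

theorem cmpl_cmpl (x : Fin n → Bool) : cmpl (cmpl x) = x := by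
  funext k; simp [cmpl]

theorem cmpl_flipAt (i : Fin n) (x : Fin n → Bool) : cmpl (flipAt i x) = flipAt i (cmpl x) := by
  funext k; by_cases h : k = i <;> simp [cmpl, flipAt_apply, h]

theorem flipAt_eq_flipAt_iff : flipAt i x = flipAt j x ↔ i = j := by
  refine ⟨fun h => by_contra fun hij => ?_, fun h => h ▸ rfl⟩
  have := congrFun h i
  simp [flipAt_apply, hij] at this

theorem cmpl_ne_flipAt (hij : i ≠ j) (x : Fin n → Bool) : cmpl x ≠ flipAt j x := by
  intro h
  have := congrFun h i
  simp [cmpl, flipAt_apply, hij] at this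

theorem hammingDist_flipAt (i : Fin n) (x : Fin n → Bool) : hammingDist x (flipAt i x) = 1 := by
  rw [hammingDist, Finset.card_eq_one]
  exact ⟨i, by ext k; by_cases h : k = i <;> simp [flipAt_apply, h]⟩

theorem exists_eq_flipAt_of_hammingDist_eq_one {x y : Fin n → Bool} (h : hammingDist x y = 1) :
    ∃ i, y = flipAt i x := by
  obtain ⟨i, hi⟩ := Finset.card_eq_one.mp h
  refine ⟨i, funext fun k => ?_⟩
  have hdiff : x k ≠ y k ↔ k = i := by simpa using Finset.ext_iff.mp hi k
  by_cases hk : k = i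
  · rw [flipAt_apply, if_pos hk]
    exact Bool.eq_not.mpr (hdiff.mpr hk).symm
  · rw [flipAt_apply_of_ne hk]
    exact (not_not.mp (mt hdiff.mp hk)).symm

theorem Q_adj_iff {x y : Fin n → Bool} : (Q n).Adj x y ↔ ∃ i, y = flipAt i x :=
  ⟨exists_eq_flipAt_of_hammingDist_eq_one, fun ⟨i, h⟩ => h ▸ hammingDist_flipAt i x⟩

theorem mk_mem_Mdir_iff {y : Fin n → Bool} : s(x, y) ∈ Mdir n j ↔ y = flipAt j x := by
  refine ⟨?_, fun h => ⟨x, h ▸ rfl⟩⟩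
  rintro ⟨z, hz⟩
  rcases Sym2.eq_iff.mp hz with ⟨rfl, rfl⟩ | ⟨rfl, rfl⟩
  · rfl
  · exact (flipAt_flipAt j _).symm

theorem mk_mem_M2_iff {y : Fin n → Bool} : s(x, y) ∈ M2 n ↔ y = cmpl x := by
  refine ⟨?_, fun h => ⟨x, h ▸ rfl⟩⟩
  rintro ⟨z, hz⟩
  rcases Sym2.eq_iff.mp hz with ⟨rfl, rfl⟩ | ⟨rfl, rfl⟩
  · rfl
  · exact (cmpl_cmpl _).symm

theorem mem_edgeSet_Q_iff {e : Sym2 (Fin n → Bool)} : e ∈ (Q n).edgeSet ↔ ∃ i, e ∈ Mdir n i := by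
  induction e using Sym2.ind with
  | _ x y => simp only [mem_edgeSet, Q_adj_iff, mk_mem_Mdir_iff]

theorem edgeSet_FQ (hn : 0 < n) : (FQ n).edgeSet = (Q n).edgeSet ∪ M2 n := by
  ext e
  induction e using Sym2.ind with
  | _ x y =>
    have hx : x ≠ cmpl x := fun h => by simpa [cmpl] using congrFun h ⟨0, hn⟩
    simp only [Set.mem_union, mem_edgeSet, mk_mem_M2_iff]
    exact or_congr_right ⟨And.right, fun h => ⟨h ▸ hx, h⟩⟩

theorem disjoint_Mdir (hij : i ≠ j) : Disjoint (Mdir n i) (Mdir n j) := by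
  rw [Set.disjoint_left]
  rintro _ ⟨x, rfl⟩ h
  exact hij (flipAt_eq_flipAt_iff.mp (mk_mem_Mdir_iff.mp h))

theorem disjoint_M2_Mdir (hij : i ≠ j) : Disjoint (M2 n) (Mdir n j) := by
  rw [Set.disjoint_left]
  rintro _ ⟨x, rfl⟩ h
  exact cmpl_ne_flipAt hij x (mk_mem_Mdir_iff.mp h)

def foldAt (j : Fin n) (x : Fin n → Bool) : Fin n → Bool := if x j then cmpl (flipAt j x) else x

theorem foldAt_of_false (hx : x j = false) : foldAt j x = x := by simp [foldAt, hx]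

theorem foldAt_of_true (hx : x j = true) : foldAt j x = cmpl (flipAt j x) := by simp [foldAt, hx]

theorem foldAt_apply (j i : Fin n) (x : Fin n → Bool) :
    foldAt j x i = if x j ∧ i ≠ j then !x i else x i := by
  unfold foldAt
  cases hx : x j <;> by_cases h : i = j <;> simp [cmpl, flipAt_apply, hx, h]

theorem foldAt_apply_self (j : Fin n) (x : Fin n → Bool) : foldAt j x j = x j := by
  simp [foldAt_apply]

theorem foldAt_involutive (j : Fin n) : Function.Involutive (foldAt j) := by
  intro x
  cases hx : x j
  · rw [foldAt_of_false hx, foldAt_of_false hx]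
  · rw [foldAt_of_true (by rw [foldAt_apply_self, hx]), foldAt_of_true hx, ← cmpl_flipAt,
      cmpl_cmpl, flipAt_flipAt]

theorem foldAt_flipAt_of_ne (hij : i ≠ j) : foldAt j (flipAt i x) = flipAt i (foldAt j x) := by
  have hj : flipAt i x j = x j := flipAt_apply_of_ne hij.symm x
  cases hx : x j
  · rw [foldAt_of_false (hj.trans hx), foldAt_of_false hx]
  · rw [foldAt_of_true (hj.trans hx), foldAt_of_true hx, flipAt_comm, cmpl_flipAt]

theorem map_foldAt_mk_flipAt_self (hx : x j = false) :
    Sym2.map (foldAt j) s(x, flipAt j x) = s(x, cmpl x) := by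
  rw [Sym2.map_mk, foldAt_of_false hx, foldAt_of_true (by simp [flipAt_apply, hx]), flipAt_flipAt]

variable (j) in
theorem Mdir_eq_image : Mdir n j = (fun x => s(x, flipAt j x)) '' {x | x j = false} := by
  ext e
  refine ⟨?_, fun ⟨x, _, hx⟩ => ⟨x, hx.symm⟩⟩
  rintro ⟨x, rfl⟩
  rcases Bool.eq_false_or_eq_true (x j) with hx | hx
  · refine ⟨flipAt j x, by simp [flipAt_apply, hx], ?_⟩
    dsimp only
    rw [flipAt_flipAt]
    exact Sym2.eq_swap
  · exact ⟨x, hx, rfl⟩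

variable (j) in
theorem M2_eq_image : M2 n = (fun x => s(x, cmpl x)) '' {x | x j = false} := by
  ext e
  refine ⟨?_, fun ⟨x, _, hx⟩ => ⟨x, hx.symm⟩⟩
  rintro ⟨x, rfl⟩
  rcases Bool.eq_false_or_eq_true (x j) with hx | hx
  · refine ⟨cmpl x, by simp [cmpl, hx], ?_⟩
    dsimp only
    rw [cmpl_cmpl]
    exact Sym2.eq_swap
  · exact ⟨x, hx, rfl⟩

theorem mapsTo_Mdir_M2 : Set.MapsTo (Sym2.map (foldAt j)) (Mdir n j) (M2 n) := by
  rw [Mdir_eq_image j]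
  rintro _ ⟨x, hx, rfl⟩
  rw [map_foldAt_mk_flipAt_self hx]
  exact ⟨x, rfl⟩

theorem mapsTo_M2_Mdir : Set.MapsTo (Sym2.map (foldAt j)) (M2 n) (Mdir n j) := by
  rw [M2_eq_image j]
  rintro _ ⟨x, hx, rfl⟩
  dsimp only
  rw [← map_foldAt_mk_flipAt_self hx, (foldAt_involutive j).sym2_map]
  exact ⟨x, rfl⟩

theorem mapsTo_Mdir_of_ne (hij : i ≠ j) :
    Set.MapsTo (Sym2.map (foldAt j)) (Mdir n i) (Mdir n i) := by
  intro e he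
  obtain ⟨x, rfl⟩ : ∃ x, e = s(x, flipAt i x) := he
  rw [Sym2.map_mk, foldAt_flipAt_of_ne hij]
  exact ⟨foldAt j x, rfl⟩

theorem mapsTo_edgeSet_Q [Nontrivial (Fin n)] :
    Set.MapsTo (Sym2.map (foldAt j)) (Q n).edgeSet ((FQ n).deleteEdges (Mdir n j)).edgeSet := by
  intro e he
  obtain ⟨i, hi⟩ := mem_edgeSet_Q_iff.mp he
  rw [edgeSet_deleteEdges, edgeSet_FQ j.pos]
  rcases eq_or_ne i j with rfl | hij
  · obtain ⟨k, hk⟩ := exists_ne i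
    have hM2 := mapsTo_Mdir_M2 hi
    exact ⟨Or.inr hM2, Set.disjoint_left.mp (disjoint_M2_Mdir hk) hM2⟩
  · have hMi := mapsTo_Mdir_of_ne hij hi
    exact ⟨Or.inl (mem_edgeSet_Q_iff.mpr ⟨i, hMi⟩), Set.disjoint_left.mp (disjoint_Mdir hij) hMi⟩

theorem mapsTo_edgeSet_deleteEdges_FQ :
    Set.MapsTo (Sym2.map (foldAt j)) ((FQ n).deleteEdges (Mdir n j)).edgeSet (Q n).edgeSet := by
  intro e he
  rw [edgeSet_deleteEdges, edgeSet_FQ j.pos] at he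
  obtain ⟨hQ | hM2, hj⟩ := he
  · obtain ⟨i, hi⟩ := mem_edgeSet_Q_iff.mp hQ
    have hij : i ≠ j := by rintro rfl; exact hj hi
    exact mem_edgeSet_Q_iff.mpr ⟨i, mapsTo_Mdir_of_ne hij hi⟩
  · exact mem_edgeSet_Q_iff.mpr ⟨j, mapsTo_M2_Mdir hM2⟩

end Hypercube

open Hypercube in
/-- The map fixing the `0`-half and complementing the first `n-1` coordinates on the `1`-half
is an involution carrying the edge set of `Q n` bijectively onto that of `FQ n − M₁`,
exchanging the cross edges `M₁` with the complement edges `M₂`. -/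
theorem stmt18 (n : ℕ) (hn : 2 ≤ n)
    (f : (Fin n → Bool) → (Fin n → Bool))
    (hf : ∀ (x : Fin n → Bool) (i : Fin n),
      f x i = if x ⟨n - 1, by omega⟩ = true ∧ (i : ℕ) < n - 1 then !x i else x i) :
    (∀ x, f (f x) = x) ∧
    Set.BijOn (Sym2.map f) ((Q n).edgeSet)
      (((FQ n).deleteEdges (Mdir n ⟨n - 1, by omega⟩)).edgeSet) ∧
    Sym2.map f '' (Mdir n ⟨n - 1, by omega⟩) = M2 n ∧
    Sym2.map f '' (M2 n) = Mdir n ⟨n - 1, by omega⟩ := by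
  let last : Fin n := ⟨n - 1, by omega⟩
  obtain rfl : f = foldAt last := by
    funext x i
    have hlt_iff : (i : ℕ) < n - 1 ↔ i ≠ last := by
      simp only [last, Ne, Fin.ext_iff]
      omega
    simp only [hf, foldAt_apply, hlt_iff]
    rfl
  have : Nontrivial (Fin n) := Fin.nontrivial_iff_two_le.mpr hn
  have hinv := (foldAt_involutive last).sym2_map
  exact ⟨foldAt_involutive last,
    hinv.bijOn_of_mapsTo mapsTo_edgeSet_Q mapsTo_edgeSet_deleteEdges_FQ,
    (hinv.bijOn_of_mapsTo mapsTo_Mdir_M2 mapsTo_M2_Mdir).image_eq,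
    (hinv.bijOn_of_mapsTo mapsTo_M2_Mdir mapsTo_Mdir_M2).image_eq⟩
end
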